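/- arXiv:2210.10259 — 3 statements merged into one kernel-verified Lean document; each statement's English description precedes it below -/
import Mathlib

section
/- Let G be a minimally Eulerian digraph and T a spanning arborescence of G. Then the digraph G - T obtained by deleting the arcs of T is acyclic. -/
open scoped Classical

variable {V : Type*}

/-- Outdegree of `v` in the digraph with arc set `A`. -/
noncomputable def outdeg (A : Finset (V × V)) (v : V) : ℕ :=
  (A.filter (fun a => a.1 = v)).card

/-- Indegree of `v` in the digraph with arc set `A`. -/
noncomputable def indeg (A : Finset (V × V)) (v : V) : ℕ :=
  (A.filter (fun a => a.2 = v)).card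

/-- `p_#(G) = (1/2) ∑_v |d⁺(v) - d⁻(v)|`. -/
noncomputable def pSharp [Fintype V] (A : Finset (V × V)) : ℕ :=
  (∑ v, ((outdeg A v : ℤ) - (indeg A v : ℤ)).natAbs) / 2

/-- A (simple) directed path, given as its list of vertices. -/
def IsDipath (A : Finset (V × V)) (l : List V) : Prop :=
  l ≠ [] ∧ l.Nodup ∧ l.Chain' (fun u v => (u, v) ∈ A)

/-- The arc set of a directed path given by its vertex list. -/
noncomputable def pathArcs (l : List V) : Finset (V × V) :=
  (l.zip l.tail).toFinset

/-- A (simple) directed cycle, given as its list of vertices (the closing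
arc from the last vertex back to the first is implicit). -/
def IsDicycle (A : Finset (V × V)) (l : List V) : Prop :=
  2 ≤ l.length ∧ l.Nodup ∧ (l ++ l.take 1).Chain' (fun u v => (u, v) ∈ A)

/-- The arc set of a directed cycle given by its vertex list. -/
noncomputable def cycleArcs (l : List V) : Finset (V × V) :=
  pathArcs (l ++ l.take 1)

/-- A digraph is loopless (simple). -/
def Loopless (A : Finset (V × V)) : Prop := ∀ a ∈ A, a.1 ≠ a.2

/-- A digraph is acyclic if it contains no directed cycle. -/
def Acyclic (A : Finset (V × V)) : Prop := ∀ l : List V, ¬ IsDicycle A l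

/-- Strong connectivity: every vertex reaches every other by a directed walk. -/
def StrongConn (A : Finset (V × V)) : Prop :=
  ∀ u v : V, Relation.ReflTransGen (fun x y => (x, y) ∈ A) u v

/-- A connected Eulerian digraph: strongly connected with balanced degrees. -/
def ConnEuler [Fintype V] (A : Finset (V × V)) : Prop :=
  StrongConn A ∧ ∀ v : V, outdeg A v = indeg A v

/-- Minimally Eulerian: connected Eulerian, and removing the arcs of any
directed cycle disconnects the digraph. -/
def MinEuler [Fintype V] (A : Finset (V × V)) : Prop :=
  ConnEuler A ∧ ∀ l : List V, IsDicycle A l → ¬ StrongConn (A \ cycleArcs l)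

/-- A directed path from `u` to `v`. -/
def IsDipathFrom (A : Finset (V × V)) (u v : V) (l : List V) : Prop :=
  IsDipath A l ∧ l.head? = some u ∧ l.getLast? = some v

/-- The adjacency relation of the `k`-th power: an arc `u → v` whenever
there is a directed path of length at most `k` from `u` to `v`. -/
def powRel (A : Finset (V × V)) (k : ℕ) (u v : V) : Prop :=
  u ≠ v ∧ ∃ l : List V, IsDipathFrom A u v l ∧ l.length ≤ k + 1

/-- Hamiltonicity of (the digraph given by) a relation `R`. -/
def IsHamiltonian (R : V → V → Prop) : Prop :=
  ∃ l : List V, l.Nodup ∧ (∀ v : V, v ∈ l) ∧ 2 ≤ l.length ∧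
    (l ++ l.take 1).Chain' R

private lemma map_fst_zip' {α β : Type*} : ∀ (x : List α) (y : List β),
    (x.zip y).map Prod.fst = x.take y.length
  | [], _ => by simp
  | a :: x, [] => by simp
  | a :: x, b :: y => by simp [map_fst_zip' x y]

private lemma map_snd_zip' {α β : Type*} : ∀ (x : List α) (y : List β),
    (x.zip y).map Prod.snd = y.take x.length
  | [], y => by simp
  | a :: x, [] => by simp
  | a :: x, b :: y => by simp [map_snd_zip' x y]

private lemma chain'_zip_mem {R : V → V → Prop} :
    ∀ (l : List V), l.Chain' R → ∀ p ∈ l.zip l.tail, R p.1 p.2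
  | [], _, p, hp => by simp at hp
  | [a], _, p, hp => by simp at hp
  | a :: b :: t, h, p, hp => by
      simp only [List.Chain', List.isChain_cons_cons] at h
      simp only [List.tail_cons, List.zip_cons_cons, List.mem_cons] at hp
      rcases hp with rfl | hp
      · exact h.1
      · exact chain'_zip_mem (b :: t) h.2 p hp

private lemma reach_of_chain' {R : V → V → Prop} :
    ∀ (l : List V) (u v : V), l.Chain' R → l.head? = some u → l.getLast? = some v →
      Relation.ReflTransGen R u v
  | [], u, v, _, hh, _ => by simp at hh
  | [a], u, v, _, hh, hl => by
      simp only [List.head?_cons, Option.some_inj] at hh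
      simp only [List.getLast?_singleton, Option.some_inj] at hl
      subst hh; subst hl
      exact Relation.ReflTransGen.refl
  | a :: b :: t, u, v, h, hh, hl => by
      simp only [List.head?_cons, Option.some_inj] at hh
      subst hh
      simp only [List.Chain', List.isChain_cons_cons] at h
      exact Relation.ReflTransGen.head h.1
        (reach_of_chain' (b :: t) b v h.2 rfl (by rw [← hl, List.getLast?_cons_cons]))

private lemma cycle_deg_eq (l : List V) (h2 : 2 ≤ l.length) (hnd : l.Nodup) (v : V) :
    outdeg (cycleArcs l) v = indeg (cycleArcs l) v := by
  obtain ⟨a, t, rfl⟩ : ∃ a t, l = a :: t := by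
    cases l with
    | nil => simp at h2
    | cons a t => exact ⟨a, t, rfl⟩
  set l' : List V := (a :: t) ++ [a] with hl'
  have hz : cycleArcs (a :: t) = (l'.zip l'.tail).toFinset := by
    rw [cycleArcs, pathArcs]
    simp [hl']
  have hfst : (l'.zip l'.tail).map Prod.fst = a :: t := by
    rw [map_fst_zip']
    have h1 : l'.tail.length = (a :: t).length := by simp [hl']
    rw [h1, hl', List.take_left]
  have hsnd : (l'.zip l'.tail).map Prod.snd = t ++ [a] := by
    rw [map_snd_zip']
    have h1 : l'.tail = t ++ [a] := by simp [hl']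
    rw [h1, List.take_of_length_le (by simp [hl'])]
  have hznd : (l'.zip l'.tail).Nodup := List.Nodup.of_map Prod.fst (hfst ▸ hnd)
  have key : ∀ (f : V × V → V) (m : List V), ((l'.zip l'.tail).map f = m) →
      ((l'.zip l'.tail).toFinset.filter (fun p => f p = v)).card
        = m.countP (fun x => x = v) := by
    intro f m hm
    have h1 : (l'.zip l'.tail).toFinset.filter (fun p => f p = v)
        = ((l'.zip l'.tail).filter (fun p => decide (f p = v))).toFinset := by
      ext p; simp
    rw [h1, List.toFinset_card_of_nodup (hznd.filter _),
      ← List.countP_eq_length_filter, ← hm, List.countP_map]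
    rfl
  have hperm : (t ++ [a]).Perm (a :: t) := List.perm_append_singleton a t
  simp only [outdeg, indeg, hz]
  rw [key Prod.fst (a :: t) hfst, key Prod.snd (t ++ [a]) hsnd, hperm.countP_eq]

/-- If `G` is minimally Eulerian and `T` is a spanning
arborescence of `G`, then `G - T` is acyclic. -/
theorem stmt7 [Fintype V] (A : Finset (V × V)) (hA : Loopless A)
    (h : MinEuler A) (T : Finset (V × V)) (hTA : T ⊆ A) (r : V)
    (hT : ∀ v : V, ∃! l : List V, IsDipathFrom T r v l) :
    Acyclic (A \ T) := by
  intro l hl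
  obtain ⟨⟨hSC, hbal⟩, hmin⟩ := h
  obtain ⟨hlen, hnd, hch⟩ := hl
  have hC_sub : cycleArcs l ⊆ A \ T := by
    intro p hp
    rw [cycleArcs, pathArcs, List.mem_toFinset] at hp
    have := chain'_zip_mem _ hch p hp
    simpa using this
  have hlA : IsDicycle A l :=
    ⟨hlen, hnd, hch.imp (fun a b hab => Finset.sdiff_subset hab)⟩
  apply hmin l hlA
  set C := cycleArcs l with hCdef
  set B := A \ C with hB
  have hCA : C ⊆ A := hC_sub.trans Finset.sdiff_subset
  have hTB : T ⊆ B := by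
    intro x hx
    refine Finset.mem_sdiff.mpr ⟨hTA hx, fun hxC => ?_⟩
    exact (Finset.mem_sdiff.mp (hC_sub hxC)).2 hx
  have hbalB : ∀ v, outdeg B v = indeg B v := by
    intro v
    have hdegC := cycle_deg_eq l hlen hnd v
    have hfil : ∀ (f : V × V → V),
        (B.filter (fun a => f a = v)).card
          = (A.filter (fun a => f a = v)).card - (C.filter (fun a => f a = v)).card := by
      intro f
      rw [hB]
      have : (A \ C).filter (fun a => f a = v)
          = A.filter (fun a => f a = v) \ C.filter (fun a => f a = v) := by
        ext p
        simp only [Finset.mem_filter, Finset.mem_sdiff]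
        tauto
      rw [this, Finset.card_sdiff_of_subset (Finset.filter_subset_filter _ hCA)]
    simp only [outdeg, indeg] at hdegC hbal ⊢
    rw [hfil Prod.fst, hfil Prod.snd, hbal v, hdegC]
  have hreach : ∀ v, Relation.ReflTransGen (fun x y => (x, y) ∈ B) r v := by
    intro v
    obtain ⟨p, ⟨⟨hne, hndp, hchp⟩, hh, hlp⟩, _⟩ := hT v
    exact Relation.ReflTransGen.mono (r := fun u v => (u, v) ∈ T) (p := fun x y => (x, y) ∈ B)
      (fun x y hxy => hTB hxy) r v (reach_of_chain' p r v hchp hh hlp)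
  have key : ∀ v, Relation.ReflTransGen (fun x y => (x, y) ∈ B) v r := by
    intro v
    set step := fun x y : V => (x, y) ∈ B with hstep
    set S : Finset V := Finset.univ.filter (fun u => Relation.ReflTransGen step v u) with hS
    have hmemS : ∀ x, x ∈ S ↔ Relation.ReflTransGen step v x := by
      intro x; simp [hS]
    have hsubf : B.filter (fun a => a.1 ∈ S) ⊆ B.filter (fun a => a.2 ∈ S) := by
      intro a ha
      rw [Finset.mem_filter] at ha ⊢
      refine ⟨ha.1, ?_⟩
      rw [hmemS] at *
      exact (ha.2).tail (show step a.1 a.2 by simpa [hstep] using ha.1)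
    have hcount : ∀ (f : V × V → V), (B.filter (fun a => f a ∈ S)).card
        = ∑ u ∈ S, (B.filter (fun a => f a = u)).card := by
      intro f
      rw [Finset.card_eq_sum_card_fiberwise
        (s := B.filter (fun a => f a ∈ S)) (f := f) (t := S)
          (fun x hx => Finset.mem_coe.mpr (Finset.mem_filter.mp (Finset.mem_coe.mp hx)).2)]
      refine Finset.sum_congr rfl (fun u hu => ?_)
      congr 1
      rw [Finset.filter_filter]
      refine Finset.filter_congr (fun a _ => ?_)
      constructor
      · exact fun h => h.2
      · exact fun h => ⟨h ▸ hu, h⟩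
    have hcards : (B.filter (fun a => a.1 ∈ S)).card
        = (B.filter (fun a => a.2 ∈ S)).card := by
      rw [hcount Prod.fst, hcount Prod.snd]
      exact Finset.sum_congr rfl (fun u _ => hbalB u)
    have heq := Finset.eq_of_subset_of_card_le hsubf hcards.ge
    have hbwd : ∀ a : V × V, a ∈ B → a.2 ∈ S → a.1 ∈ S := by
      intro a ha h2
      have : a ∈ B.filter (fun a => a.2 ∈ S) := Finset.mem_filter.mpr ⟨ha, h2⟩
      rw [← heq] at this
      exact (Finset.mem_filter.mp this).2
    have hrS : r ∈ S := by
      refine Relation.ReflTransGen.head_induction_on (hreach v) ?_ ?_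
      · rw [hmemS]
      · intro x c hxc _ hcS
        exact hbwd (x, c) hxc hcS
    rw [hmemS] at hrS
    exact hrS
  exact fun u w => (key u).trans (hreach w)
end

section
/- A connected Eulerian digraph G is minimally Eulerian if and only if for every directed cycle C in G, the digraph G - C (with the arcs of C removed) is disconnected. -/
open scoped Classical

variable {V : Type*}

section Aux
variable {V : Type*}

open Finset in
lemma filter_sdiff' (p : V × V → Prop) [DecidablePred p] (A C : Finset (V × V)) :
    (A \ C).filter p = A.filter p \ C.filter p := by
  ext a; simp [Finset.mem_filter, Finset.mem_sdiff]; tauto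

lemma outdeg_sdiff (A C : Finset (V × V)) (hCA : C ⊆ A) (v : V) :
    outdeg (A \ C) v = outdeg A v - outdeg C v := by
  unfold outdeg
  rw [filter_sdiff']
  exact Finset.card_sdiff_of_subset (Finset.filter_subset_filter _ hCA)

lemma indeg_sdiff (A C : Finset (V × V)) (hCA : C ⊆ A) (v : V) :
    indeg (A \ C) v = indeg A v - indeg C v := by
  unfold indeg
  rw [filter_sdiff']
  exact Finset.card_sdiff_of_subset (Finset.filter_subset_filter _ hCA)

lemma outdeg_mono {A C : Finset (V × V)} (hCA : C ⊆ A) (v : V) :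
    outdeg C v ≤ outdeg A v :=
  Finset.card_le_card (Finset.filter_subset_filter _ hCA)

lemma indeg_mono {A C : Finset (V × V)} (hCA : C ⊆ A) (v : V) :
    indeg C v ≤ indeg A v :=
  Finset.card_le_card (Finset.filter_subset_filter _ hCA)

lemma mem_zip_tail {R : V → V → Prop} :
    ∀ {l : List V}, l.Chain' R → ∀ p ∈ l.zip l.tail, R p.1 p.2
  | [], _, p, hp => by simp at hp
  | [a], _, p, hp => by simp at hp
  | a :: b :: t, h, p, hp => by
    replace h := List.isChain_cons_cons.mp h
    simp only [List.tail_cons, List.zip_cons_cons, List.mem_cons] at hp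
    rcases hp with rfl | hp
    · exact h.1
    · exact mem_zip_tail h.2 p hp

lemma pathArcs_subset {A : Finset (V × V)} {l : List V}
    (h : l.Chain' (fun u v => (u, v) ∈ A)) : pathArcs l ⊆ A := by
  intro p hp
  rw [pathArcs, List.mem_toFinset] at hp
  exact mem_zip_tail h p hp

lemma zip_tail_maps : ∀ (l : List V),
    (l.zip l.tail).map Prod.fst = l.dropLast ∧ (l.zip l.tail).map Prod.snd = l.tail
  | [] => by simp
  | [a] => by simp
  | a :: b :: t => by
    have ih := zip_tail_maps (b :: t)
    simp only [List.tail_cons] at ih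
    refine ⟨?_, ?_⟩
    · show a :: List.map Prod.fst ((b :: t).zip t) = a :: (b :: t).dropLast
      rw [ih.1]
    · show b :: List.map Prod.snd ((b :: t).zip t) = b :: t
      rw [ih.2]

lemma strongConn_mono {B X : Finset (V × V)} (h : B ⊆ X) (hs : StrongConn B) :
    StrongConn X :=
  fun u v => Relation.ReflTransGen.mono (fun _ _ hxy => h hxy) u v (hs u v)

lemma cycleArcs_subset {A : Finset (V × V)} {l : List V} (h : IsDicycle A l) :
    cycleArcs l ⊆ A :=
  pathArcs_subset h.2.2

lemma cycleArcs_nonempty {l : List V} (h2 : 2 ≤ l.length) :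
    (cycleArcs l).Nonempty := by
  rw [cycleArcs, pathArcs]
  rw [List.toFinset_nonempty_iff]
  intro hnil
  have := congrArg List.length hnil
  rw [List.length_zip] at this
  simp only [List.length_nil, List.length_tail, List.length_append,
    List.length_take] at this
  omega

lemma count_filter_card (z : List (V × V)) (hz : z.Nodup) (p : V × V → Prop)
    [DecidablePred p] : (z.toFinset.filter p).card = z.countP (fun a => decide (p a)) := by
  classical
  have : z.toFinset.filter p = (z.filter (fun a => decide (p a))).toFinset := by
    ext a
    simp [List.mem_filter, Finset.mem_filter, List.mem_toFinset, and_comm]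
  rw [this, List.toFinset_card_of_nodup (hz.filter _), ← List.countP_eq_length_filter]

lemma cycle_deg {l : List V} (h2 : 2 ≤ l.length) (hnd : l.Nodup) (v : V) :
    outdeg (cycleArcs l) v = indeg (cycleArcs l) v := by
  classical
  obtain ⟨a, t, rfl⟩ : ∃ a t, l = a :: t := by
    cases l with
    | nil => simp at h2
    | cons a t => exact ⟨a, t, rfl⟩
  set l : List V := a :: t with hl
  set L : List V := l ++ l.take 1 with hL
  have hLtake : l.take 1 = [a] := by simp [hl]
  set z : List (V × V) := L.zip L.tail with hz
  have hmaps := zip_tail_maps L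
  have hfst : z.map Prod.fst = l := by
    rw [hmaps.1, hL, hLtake, List.dropLast_concat]
  have hsnd : z.map Prod.snd = t ++ [a] := by
    rw [hmaps.2, hL, hLtake, hl]
    simp
  have hznd : z.Nodup := List.Nodup.of_map Prod.fst (by rw [hfst]; exact hnd)
  have hC : cycleArcs l = z.toFinset := rfl
  have hcount : ∀ (f : V × V → V), (z.map f).Nodup →
      (z.toFinset.filter (fun p => f p = v)).card = if v ∈ z.map f then 1 else 0 := by
    intro f hfnd
    rw [count_filter_card z hznd]
    have : z.countP (fun a => decide (f a = v)) = (z.map f).countP (fun x => decide (x = v)) := by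
      rw [List.countP_map]; rfl
    rw [this]
    have : (z.map f).countP (fun x => decide (x = v)) = (z.map f).count v := by
      rw [List.count]
      apply List.countP_congr
      intro x _
      simp [beq_iff_eq]
    rw [this]
    split_ifs with hv
    · exact List.count_eq_one_of_mem hfnd hv
    · exact List.count_eq_zero_of_not_mem hv
  have hndsnd : (t ++ [a]).Nodup := by
    rw [hl, List.nodup_cons] at hnd
    rw [List.nodup_append]
    refine ⟨hnd.2, List.nodup_singleton a, ?_⟩
    intro x hx
    simp only [List.mem_singleton]
    rintro _ rfl rfl
    exact hnd.1 hx
  have h1 := hcount Prod.fst (by rw [hfst]; exact hnd)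
  have h2' := hcount Prod.snd (by rw [hsnd]; exact hndsnd)
  rw [hfst] at h1
  rw [hsnd] at h2'
  have hmem : (v ∈ l) ↔ (v ∈ t ++ [a]) := by
    simp [hl, List.mem_append, or_comm]
  unfold outdeg indeg
  rw [hC, h1, h2']
  exact if_congr hmem rfl rfl

lemma cycle_of_closing {D : Finset (V × V)} {l : List V} (hnd : l.Nodup)
    (hch : l.Chain' (fun u v => (u, v) ∈ D)) (hne : l ≠ [])
    {x : V} (hx : x ∈ l) (harc : (l.getLast hne, x) ∈ D)
    (hxl : x ≠ l.getLast hne) : ∃ c, IsDicycle D c := by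
  obtain ⟨s, t, rfl⟩ := List.append_of_mem hx
  refine ⟨x :: t, ?_, ?_, ?_⟩
  · -- length ≥ 2
    by_contra hlen
    push_neg at hlen
    interval_cases ht : (x :: t).length
    · simp at ht
    · have ht' : t = [] := by
        cases t with
        | nil => rfl
        | cons _ _ => simp at ht
      subst ht'
      apply hxl
      rw [List.getLast_append]
      simp
  · exact hnd.sublist (List.suffix_append s (x :: t)).sublist
  · have hlast : (s ++ x :: t).getLast hne = (x :: t).getLast (by simp) := by
      rw [List.getLast_append]
      simp
    have htake : (x :: t).take 1 = [x] := by simp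
    rw [htake]
    apply List.isChain_append.mpr
    refine ⟨(List.isChain_append.mp hch).2.1, List.isChain_singleton x, ?_⟩
    intro p hp q hq
    simp only [List.head?_cons, Option.mem_def, Option.some_inj] at hq
    subst hq
    have hp' : (x :: t).getLast (by simp) = p := by
      rwa [List.getLast?_eq_getLast (by simp), Option.mem_def, Option.some_inj] at hp
    rw [← hp', ← hlast]
    exact harc

lemma exists_dicycle [Fintype V] {D : Finset (V × V)} (hl : Loopless D)
    (hbal : ∀ v, indeg D v ≤ outdeg D v) (hne : D.Nonempty) :
    ∃ c, IsDicycle D c := by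
  classical
  by_contra hno
  push_neg at hno
  have key : ∀ n : ℕ, ∃ l : List V, l.Nodup ∧
      l.Chain' (fun u v => (u, v) ∈ D) ∧ l.length = n + 2 := by
    intro n
    induction n with
    | zero =>
      obtain ⟨⟨u, w⟩, huw⟩ := hne
      exact ⟨[u, w], by simp [hl _ huw], List.isChain_pair.mpr huw, rfl⟩
    | succ n ih =>
      obtain ⟨l, hnd, hch, hlen⟩ := ih
      have hlne : l ≠ [] := by intro h; rw [h] at hlen; simp at hlen
      set w := l.getLast hlne with hw
      -- w has an incoming arc
      have hin : 1 ≤ indeg D w := by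
        have hi : l.length - 2 < l.length - 1 := by omega
        have harc := List.isChain_iff_getElem.mp hch (l.length - 2) (by omega)
        have hget : l[l.length - 2 + 1]'(by omega) = w := by
          rw [hw, List.getLast_eq_getElem]
          congr 1
          omega
        rw [hget] at harc
        rw [indeg, Nat.one_le_iff_ne_zero, ← Nat.pos_iff_ne_zero, Finset.card_pos]
        exact ⟨_, Finset.mem_filter.mpr ⟨harc, rfl⟩⟩
      have hout : 1 ≤ outdeg D w := le_trans hin (hbal w)
      rw [outdeg, Nat.one_le_iff_ne_zero, ← Nat.pos_iff_ne_zero, Finset.card_pos] at hout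
      obtain ⟨p, hpmem⟩ := hout
      rw [Finset.mem_filter] at hpmem
      obtain ⟨hpD, hpw⟩ := hpmem
      set x := p.2 with hxdef
      have hxD : (w, x) ∈ D := by rw [← hpw]; simpa using hpD
      have hxw : x ≠ w := fun hh => hl _ hxD hh.symm
      have hxnl : x ∉ l := by
        intro hxl
        exact hno _ (cycle_of_closing hnd hch hlne hxl hxD hxw).choose_spec
      refine ⟨l ++ [x], ?_, ?_, ?_⟩
      · rw [List.nodup_append]
        exact ⟨hnd, List.nodup_singleton x, fun a ha b hb hab => by
          subst hab; rw [List.mem_singleton] at hb; exact hxnl (hb ▸ ha)⟩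
      · apply List.isChain_append.mpr
        refine ⟨hch, List.isChain_singleton x, ?_⟩
        intro p hp q hq
        simp only [List.head?_cons, Option.mem_def, Option.some_inj] at hq
        subst hq
        rw [List.getLast?_eq_getLast hlne, Option.mem_def, Option.some_inj] at hp
        subst hp
        exact hxD
      · simp [hlen]
  obtain ⟨l, hnd, _, hlen⟩ := key (Fintype.card V)
  have := hnd.length_le_card
  omega

end Aux

/-- A connected Eulerian digraph has no proper connected Eulerian
spanning subgraph iff removing the arcs of any directed cycle disconnects it. -/
theorem stmt9 [Fintype V] (A : Finset (V × V)) (hA : Loopless A)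
    (h : ConnEuler A) :
    (¬ ∃ B : Finset (V × V), B ⊂ A ∧ ConnEuler B) ↔
      ∀ l : List V, IsDicycle A l → ¬ StrongConn (A \ cycleArcs l) := by
  constructor
  · intro hmin l hcyc hconn
    apply hmin
    refine ⟨A \ cycleArcs l, Finset.sdiff_ssubset (cycleArcs_subset hcyc)
      (cycleArcs_nonempty hcyc.1), hconn, ?_⟩
    intro v
    have hsub := cycleArcs_subset hcyc
    rw [outdeg_sdiff A _ hsub, indeg_sdiff A _ hsub, h.2 v,
      cycle_deg hcyc.1 hcyc.2.1 v]
  · rintro hcut ⟨B, hBA, hBconn, hBdeg⟩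
    set D := A \ B with hD
    have hBsub : B ⊆ A := hBA.subset
    have hDne : D.Nonempty := by
      obtain ⟨x, hxA, hxB⟩ := Finset.exists_of_ssubset hBA
      exact ⟨x, Finset.mem_sdiff.mpr ⟨hxA, hxB⟩⟩
    have hDloop : Loopless D := fun a ha => hA a (Finset.mem_sdiff.mp ha).1
    have hDbal : ∀ v, indeg D v ≤ outdeg D v := by
      intro v
      rw [outdeg_sdiff A B hBsub, indeg_sdiff A B hBsub, h.2 v, hBdeg v]
    obtain ⟨c, hc⟩ := exists_dicycle hDloop hDbal hDne
    have hcA : IsDicycle A c :=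
      ⟨hc.1, hc.2.1, hc.2.2.imp (fun _ _ hab => (Finset.mem_sdiff.mp hab).1)⟩
    have hcD : cycleArcs c ⊆ D := cycleArcs_subset hc
    have hBsub' : B ⊆ A \ cycleArcs c := by
      intro b hb
      rw [Finset.mem_sdiff]
      refine ⟨hBsub hb, fun hbc => ?_⟩
      exact (Finset.mem_sdiff.mp (hcD hbc)).2 hb
    exact hcut c hcA (strongConn_mono hBsub' hBconn)
end

section
/- In the digraph G_k (k ≥ 4), the directed graph distance between any two distinct vertices v_i and v_j is at least ceil(k/2) + 1. -/
open scoped Classical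

variable {V : Type*}

/-- `ℓ = k(k+1)/2`. -/
def ell (k : ℕ) : ℕ := k * (k + 1) / 2

/-- `φ(i)` is the least `p` with `∑_{j=1}^p (k+1-j) ≥ i`. -/
noncomputable def phi (k i : ℕ) : ℕ :=
  sInf {p : ℕ | i ≤ ∑ j ∈ Finset.Icc 1 p, (k + 1 - j)}

/-- Vertices of `G_k`: `u_1,...,u_{ℓ-1}` (left) and `v_1,...,v_ℓ` (right),
where `Sum.inl i` is `u_{i+1}` and `Sum.inr m` is `v_{m+1}`. -/
abbrev GkV (k : ℕ) := Fin (ell k - 1) ⊕ Fin (ell k)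

/-- Adjacency of `G_k`: arcs `u_i → u_j` for `0 < j - i ≤ k`, and arcs
`u_{ℓ-φ(i)} → v_i` and `v_i → u_{φ(i)}` for `i = 1,...,ℓ`. -/
def GkAdj (k : ℕ) : GkV k → GkV k → Prop
  | Sum.inl i, Sum.inl j => i.val < j.val ∧ j.val - i.val ≤ k
  | Sum.inl i, Sum.inr m => i.val + 1 = ell k - phi k (m.val + 1)
  | Sum.inr m, Sum.inl j => j.val + 1 = phi k (m.val + 1)
  | Sum.inr _, Sum.inr _ => False

/-- The arc set of `G_k`. -/
noncomputable def GkArcs (k : ℕ) : Finset (GkV k × GkV k) :=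
  Finset.univ.filter (fun p => GkAdj k p.1 p.2)

lemma ell_two (k : ℕ) : ell k * 2 = k * (k + 1) :=
  Nat.div_mul_cancel (Nat.even_mul_succ_self k).two_dvd

lemma sum_S (k : ℕ) : ∑ j ∈ Finset.Icc 1 k, (k + 1 - j) = ell k := by
  have h1 : ∑ j ∈ Finset.Icc 1 k, (k + 1 - j) = ∑ j ∈ Finset.Icc 1 k, j := by
    apply Finset.sum_nbij' (fun j => k + 1 - j) (fun j => k + 1 - j) <;>
      intros a ha <;> simp_all [Finset.mem_Icc] <;> omega
  have h2 : ∑ j ∈ Finset.Icc 1 k, j = ∑ j ∈ Finset.range (k+1), j := by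
    rw [← Finset.Ico_add_one_right_eq_Icc, Finset.sum_Ico_eq_sum_range, Finset.range_eq_Ico,
      Finset.sum_Ico_eq_sum_range]
    simp [Finset.sum_range_succ', add_comm]
  have h3 : (∑ i ∈ Finset.range (k+1), i) * 2 = k * (k+1) := by
    simpa [Nat.mul_comm] using Finset.sum_range_id_mul_two (k+1)
  have h4 := ell_two k
  omega

lemma k_le_ell {k : ℕ} (hk : 1 ≤ k) : k ≤ ell k := by
  have h := ell_two k
  have : k * 2 ≤ k * (k + 1) := Nat.mul_le_mul_left k (by omega)
  omega

lemma phi_le_k {k m : ℕ} (hm : m ≤ ell k) : phi k m ≤ k :=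
  Nat.sInf_le (by simpa [Set.mem_setOf_eq, sum_S] using hm)

lemma phi_le_pred {k m : ℕ} (hk : 1 ≤ k) (hm : m ≤ ell k - 1) : phi k m ≤ k - 1 := by
  apply Nat.sInf_le
  have h := Finset.sum_Icc_succ_top (a := 1) (b := k - 1)
    (Nat.le_add_left 1 (k-1)) (fun j => k + 1 - j)
  rw [show k - 1 + 1 = k from by omega, sum_S] at h
  have hk1 : k + 1 - k = 1 := by omega
  simp only [Set.mem_setOf_eq]
  omega

lemma phi_sum_le {k : ℕ} (hk : 1 ≤ k) (i j : Fin (ell k)) (hij : i ≠ j) :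
    phi k (i.val + 1) + phi k (j.val + 1) ≤ 2 * k - 1 := by
  have hi : i.val + 1 ≤ ell k := i.isLt
  have hj : j.val + 1 ≤ ell k := j.isLt
  by_cases h : i.val + 1 = ell k
  · have hj' : j.val + 1 ≤ ell k - 1 := by
      have : j.val + 1 ≠ ell k := fun hc => hij (Fin.ext (by omega))
      omega
    have := phi_le_k hi
    have := phi_le_pred hk hj'
    omega
  · have hi' : i.val + 1 ≤ ell k - 1 := by omega
    have := phi_le_pred hk hi'
    have := phi_le_k hj
    omega

/-- The potential function used in the distance lower bound. -/
noncomputable def fGk (k : ℕ) : GkV k → ℕ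
  | Sum.inl p => p.val + 1
  | Sum.inr m => ell k + k - phi k (m.val + 1)

lemma fGk_arc {k : ℕ} (hk : 1 ≤ k) {x y : GkV k} (h : GkAdj k x y) :
    fGk k y ≤ fGk k x + k := by
  have hke := k_le_ell hk
  cases x with
  | inl p =>
    cases y with
    | inl q =>
      obtain ⟨h1, h2⟩ := h
      simp only [fGk]; omega
    | inr m =>
      have hm : m.val + 1 ≤ ell k := m.isLt
      have hφ := phi_le_k hm
      have h' : p.val + 1 = ell k - phi k (m.val + 1) := h
      simp only [fGk]; omega
  | inr m =>
    cases y with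
    | inl q =>
      have hm : m.val + 1 ≤ ell k := m.isLt
      have hφ := phi_le_k hm
      have h' : q.val + 1 = phi k (m.val + 1) := h
      simp only [fGk]; omega
    | inr m' => exact absurd h (by simp [GkAdj])

lemma chain_bound {α : Type*} (f : α → ℕ) (k : ℕ) (R : α → α → Prop)
    (h : ∀ x y, R x y → f y ≤ f x + k) :
    ∀ l : List α, l.Chain' R → ∀ a b, l.head? = some a → l.getLast? = some b →
      f b ≤ f a + k * (l.length - 1) := by
  intro l
  induction l with
  | nil => intro _ a b ha; simp at ha
  | cons x t ih =>
    intro hc a b ha hb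
    cases t with
    | nil =>
      simp only [List.head?_cons, Option.some.injEq] at ha
      simp only [List.getLast?_singleton, Option.some.injEq] at hb
      subst ha; subst hb; simp
    | cons y t' =>
      simp only [List.head?_cons, Option.some.injEq] at ha
      subst ha
      rw [List.getLast?_cons_cons] at hb
      obtain ⟨hxy, hc'⟩ := List.isChain_cons_cons.mp hc
      have h1 := ih hc' y b rfl hb
      have h2 := h x y hxy
      simp only [List.length_cons, Nat.add_sub_cancel] at h1 ⊢
      have h3 : k * (t'.length + 1) = k * t'.length + k := by ring
      omega

/-- In `G_k` (`k ≥ 4`), the directed distance between any two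
distinct vertices `v_i, v_j` is at least `⌈k/2⌉ + 1`; i.e., every directed
path between them has at least `⌈k/2⌉ + 1` arcs. -/
theorem stmt17 (k : ℕ) (hk : 4 ≤ k) (i j : Fin (ell k)) (hij : i ≠ j)
    (l : List (GkV k)) (hl : IsDipathFrom (GkArcs k) (Sum.inr i) (Sum.inr j) l) :
    (k + 1) / 2 + 1 + 1 ≤ l.length := by
  obtain ⟨⟨hne, hnodup, hchain⟩, hhead, hlast⟩ := hl
  have hk1 : 1 ≤ k := by omega
  cases l with
  | nil => simp at hhead
  | cons x t =>
    simp only [List.head?_cons, Option.some.injEq] at hhead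
    subst hhead
    cases t with
    | nil =>
      simp only [List.getLast?_singleton, Option.some.injEq, Sum.inr.injEq] at hlast
      exact absurd hlast hij
    | cons y t' =>
      obtain ⟨harc, hc'⟩ := List.isChain_cons_cons.mp hchain
      have hadj : GkAdj k (Sum.inr i) y := by
        simpa [GkArcs] using harc
      cases y with
      | inr m => exact absurd hadj (by simp [GkAdj])
      | inl p =>
        have hp : p.val + 1 = phi k (i.val + 1) := hadj
        rw [List.getLast?_cons_cons] at hlast
        have hb := chain_bound (fGk k) k _
          (fun x y hxy => fGk_arc hk1 (by simpa [GkArcs] using hxy))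
          (Sum.inl p :: t') hc' (Sum.inl p) (Sum.inr j) rfl hlast
        simp only [fGk, List.length_cons, Nat.add_sub_cancel] at hb
        -- hb : ell k + k - phi k (j+1) ≤ p + 1 + k * t'.length
        have hsum := phi_sum_le hk1 i j hij
        have hje : j.val + 1 ≤ ell k := j.isLt
        have hφj := phi_le_k hje
        have hke := k_le_ell hk1
        have hmain : ell k + k + 1 ≤ 2 * k + k * t'.length := by omega
        -- final arithmetic
        by_contra hc
        push_neg at hc
        simp only [List.length_cons] at hc
        have hd : 2 * t'.length ≤ k - 1 := by omega
        have e1 : k * (2 * t'.length) ≤ k * (k - 1) := Nat.mul_le_mul_left k hd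
        have e2 : k * (2 * t'.length) = 2 * (k * t'.length) := by ring
        have e3 : k * (k - 1) + 2 * k = k * (k + 1) := by
          cases k with
          | zero => omega
          | succ n => simp [Nat.succ_sub_one]; ring
        have e4 := ell_two k
        omega
end
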